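/- If M is a left R-module with finite X-Gorenstein projective dimension n ≥ 1, then there exists a short exact sequence 0 → K → G → M → 0 with G X-Gorenstein projective and pd(K) = n − 1. -/

import Mathlib

open CategoryTheory DirectSum

universe u

/-- An `𝒳`-complete projective resolution: a doubly infinite exact sequence of
projective `R`-modules that remains exact after applying `Hom_R(-, Y)`
for every `Y` in the class `𝒳`. -/
structure XCompleteResolution (R : Type u) [Ring R] (𝒳 : ModuleCat.{u} R → Prop) where
  P : ℤ → ModuleCat.{u} R
  d : ∀ n : ℤ, P n →ₗ[R] P (n + 1)
  projective : ∀ n, Module.Projective R (P n)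
  exact : ∀ n, Function.Exact (d n) (d (n + 1))
  homExact : ∀ (Y : ModuleCat.{u} R), 𝒳 Y → ∀ n : ℤ,
    Function.Exact (fun f : P (n + 1 + 1) →ₗ[R] Y => f ∘ₗ d (n + 1))
      (fun f : P (n + 1) →ₗ[R] Y => f ∘ₗ d n)

/-- `G` is `𝒳`-Gorenstein projective: it is a kernel in an `𝒳`-complete
projective resolution. -/
def XGorensteinProjective (R : Type u) [Ring R] (𝒳 : ModuleCat.{u} R → Prop)
    (G : ModuleCat.{u} R) : Prop :=
  ∃ C : XCompleteResolution R 𝒳, Nonempty (G ≃ₗ[R] LinearMap.ker (C.d 0))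

/-- `ResWithKernel R 𝒞 n K M` says that there is an exact sequence
`0 → K → G_{n-1} → ⋯ → G_0 → M → 0` in which every `G_i` belongs to the class `𝒞`. -/
def ResWithKernel (R : Type u) [Ring R] (𝒞 : ModuleCat.{u} R → Prop) :
    ℕ → ModuleCat.{u} R → ModuleCat.{u} R → Prop
  | 0, K, M => Nonempty (K ≃ₗ[R] M)
  | n + 1, K, M => ∃ (G L : ModuleCat.{u} R) (f : L →ₗ[R] G) (g : G →ₗ[R] M),
      𝒞 G ∧ Function.Injective f ∧ Function.Surjective g ∧ Function.Exact f g ∧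
      ResWithKernel R 𝒞 n K L

/-- The resolution dimension of `M` with respect to a class `𝒞` of modules:
the least length of a resolution of `M` by modules in `𝒞` (`⊤` if none exists). -/
noncomputable def relDim (R : Type u) [Ring R] (𝒞 : ModuleCat.{u} R → Prop)
    (M : ModuleCat.{u} R) : ℕ∞ :=
  sInf {n : ℕ∞ | ∃ m : ℕ, n = m ∧ ∃ K, 𝒞 K ∧ ResWithKernel R 𝒞 m K M}

/-- The `𝒳`-Gorenstein projective dimension of `M`. -/
noncomputable def xGpd (R : Type u) [Ring R] (𝒳 : ModuleCat.{u} R → Prop)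
    (M : ModuleCat.{u} R) : ℕ∞ :=
  relDim R (XGorensteinProjective R 𝒳) M

/-- The projective dimension of `M`. -/
noncomputable def pdim (R : Type u) [Ring R] (M : ModuleCat.{u} R) : ℕ∞ :=
  relDim R (fun N => Module.Projective R N) M

/-- The Gorenstein projective dimension of `M`:
the `𝒳`-Gorenstein projective dimension for `𝒳` the class of projective modules. -/
noncomputable def gpd (R : Type u) [Ring R] (M : ModuleCat.{u} R) : ℕ∞ :=
  xGpd R (fun N => Module.Projective R N) M

/-!
Write `0 → L → G₀ → M → 0` with `G₀` `𝒳`-Gorenstein projective and `𝒳-Gpd L ≤ n - 1`, and, by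
induction, `0 → K' → G' → L → 0` with `G'` `𝒳`-Gorenstein projective and `pd K' ≤ n - 2` (for
`n = 1`: `G' = L`, `K' = 0`). Embed `G'` in a projective `P` with `𝒳`-Gorenstein projective
cokernel `H`. The pushout `D` of `P ← G' → L` sits in `0 → K' → P → D → 0` and
`0 → L → D → H → 0`, and the pushout `E` of `G₀ ← L → D` in `0 → D → E → M → 0` and
`0 → G₀ → E → H → 0`. So `pd D ≤ n - 1`, and `E` is `𝒳`-Gorenstein projective since these modules
are closed under extensions: a horseshoe construction splices complete resolutions of the outer
terms, and it stays `Hom(-, X)`-exact because `Ext¹(G, X) = 0` for `G` `𝒳`-Gorenstein projective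
and `X ∈ 𝒳`. Conversely `pd D < n - 1` would give `𝒳-Gpd M < n`, projectives being
`𝒳`-Gorenstein projective.
-/

open Function

section ShortExact

variable {R : Type*} [Ring R] {A B C A' C' Y : Type*} [AddCommGroup A] [AddCommGroup B]
  [AddCommGroup C] [AddCommGroup A'] [AddCommGroup C'] [AddCommGroup Y] [Module R A]
  [Module R B] [Module R C] [Module R A'] [Module R C'] [Module R Y]

structure IsShortExact (f : A →ₗ[R] B) (g : B →ₗ[R] C) : Prop where
  injective : Injective f
  surjective : Surjective g
  exact : Exact f g

theorem IsShortExact.comp_linearEquiv {f : A →ₗ[R] B} {g : B →ₗ[R] C} (h : IsShortExact f g)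
    (e₁ : A' ≃ₗ[R] A) (e₃ : C ≃ₗ[R] C') :
    IsShortExact (f ∘ₗ e₁.toLinearMap) (e₃.toLinearMap ∘ₗ g) where
  injective := h.injective.comp e₁.injective
  surjective := e₃.surjective.comp h.surjective
  exact :=
    LinearEquiv.postcomp_exact_iff_exact.mpr (LinearEquiv.precomp_exact_iff_exact.mpr h.exact)

theorem LinearMap.exists_comp_eq_of_surjective {g : B →ₗ[R] C} (hg : Surjective g)
    (φ : B →ₗ[R] Y) (h : ker g ≤ ker φ) : ∃ ψ : C →ₗ[R] Y, ψ ∘ₗ g = φ :=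
  ⟨(ker g).liftQ φ h ∘ₗ (g.quotKerEquivOfSurjective hg).symm.toLinearMap, by ext x; simp⟩

theorem LinearMap.exists_comp_eq_of_injective {f : A →ₗ[R] B} (hf : Injective f)
    (φ : Y →ₗ[R] B) (h : range φ ≤ range f) : ∃ ψ : Y →ₗ[R] A, f ∘ₗ ψ = φ :=
  ⟨(LinearEquiv.ofInjective f hf).symm.toLinearMap ∘ₗ φ.codRestrict (range f) (fun y => h ⟨y, rfl⟩),
    by ext y; simp⟩

end ShortExact

namespace LinearMap

section Pushout

variable {R : Type*} [Ring R] {X Y Z C K : Type*} [AddCommGroup X] [AddCommGroup Y]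
  [AddCommGroup Z] [AddCommGroup C] [AddCommGroup K] [Module R X] [Module R Y] [Module R Z]
  [Module R C] [Module R K] (a : X →ₗ[R] Y) (b : X →ₗ[R] Z)

abbrev Pushout : Type _ := (Y × Z) ⧸ range (a.prod (-b))

def pushoutInl : Y →ₗ[R] Pushout a b := (range (a.prod (-b))).mkQ ∘ₗ inl R Y Z

def pushoutInr : Z →ₗ[R] Pushout a b := (range (a.prod (-b))).mkQ ∘ₗ inr R Y Z

variable {a b}

@[simp]
theorem pushoutInl_apply (y : Y) : pushoutInl a b y = Submodule.Quotient.mk (y, 0) := rfl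

@[simp]
theorem pushoutInr_apply (z : Z) : pushoutInr a b z = Submodule.Quotient.mk (0, z) := rfl

theorem pushout_mk_eq_zero_iff (y : Y) (z : Z) :
    (Submodule.Quotient.mk (y, z) : Pushout a b) = 0 ↔ ∃ x, a x = y ∧ -b x = z := by
  simp [Submodule.Quotient.mk_eq_zero, Prod.ext_iff]

theorem isShortExact_pushoutInr {q : Y →ₗ[R] C} (h : IsShortExact a q) :
    ∃ q' : Pushout a b →ₗ[R] C, IsShortExact (pushoutInr a b) q' := by
  have hN : range (a.prod (-b)) ≤ ker (q ∘ₗ fst R Y Z) := by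
    rintro _ ⟨x, rfl⟩
    simpa using h.exact.apply_apply_eq_zero x
  refine ⟨(range (a.prod (-b))).liftQ _ hN, ?_, ?_, ?_⟩
  · refine (injective_iff_map_eq_zero _).mpr fun z hz => ?_
    obtain ⟨x, hx, rfl⟩ := (pushout_mk_eq_zero_iff 0 z).mp hz
    simp [h.injective (hx.trans (map_zero a).symm)]
  · intro c
    obtain ⟨y, rfl⟩ := h.surjective c
    exact ⟨Submodule.Quotient.mk (y, 0), rfl⟩
  · intro w
    refine ⟨fun hw => ?_, by rintro ⟨z, rfl⟩; simp⟩
    obtain ⟨⟨y, z⟩, rfl⟩ := Submodule.mkQ_surjective _ w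
    obtain ⟨x, rfl⟩ := (h.exact y).mp (by simpa using hw)
    exact ⟨z + b x, (Submodule.Quotient.eq _).mpr ⟨-x, by simp⟩⟩

theorem isShortExact_pushoutInl {t : Z →ₗ[R] C} (h : IsShortExact b t) :
    ∃ t' : Pushout a b →ₗ[R] C, IsShortExact (pushoutInl a b) t' := by
  have hN : range (a.prod (-b)) ≤ ker (t ∘ₗ snd R Y Z) := by
    rintro _ ⟨x, rfl⟩
    simpa using h.exact.apply_apply_eq_zero x
  refine ⟨(range (a.prod (-b))).liftQ _ hN, ?_, ?_, ?_⟩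
  · refine (injective_iff_map_eq_zero _).mpr fun y hy => ?_
    obtain ⟨x, rfl, hx⟩ := (pushout_mk_eq_zero_iff _ 0).mp hy
    simp [h.injective (neg_eq_zero.mp hx |>.trans (map_zero b).symm)]
  · intro c
    obtain ⟨z, rfl⟩ := h.surjective c
    exact ⟨Submodule.Quotient.mk (0, z), rfl⟩
  · intro w
    refine ⟨fun hw => ?_, by rintro ⟨y, rfl⟩; simp⟩
    obtain ⟨⟨y, z⟩, rfl⟩ := Submodule.mkQ_surjective _ w
    obtain ⟨x, rfl⟩ := (h.exact z).mp (by simpa using hw)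
    exact ⟨y + a x, (Submodule.Quotient.eq _).mpr ⟨x, by simp⟩⟩

theorem pushoutInl_surjective (hb : Surjective b) : Surjective (pushoutInl a b) := by
  rintro ⟨y, z⟩
  obtain ⟨x, rfl⟩ := hb z
  refine ⟨y + a x, (Submodule.Quotient.eq _).mpr ⟨x, ?_⟩⟩
  simp

theorem exact_comp_pushoutInl {k : K →ₗ[R] X} (hk : Exact k b) :
    Exact (a ∘ₗ k) (pushoutInl a b) := by
  intro y
  simp only [pushoutInl_apply, pushout_mk_eq_zero_iff, neg_eq_zero, coe_comp, Set.mem_range]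
  refine ⟨fun ⟨x, hx, hbx⟩ => ?_, fun ⟨w, hw⟩ => ⟨k w, hw, hk.apply_apply_eq_zero w⟩⟩
  obtain ⟨w, rfl⟩ := (hk x).mp hbx
  exact ⟨w, hx⟩

end Pushout

end LinearMap

section ExtOneVanishes

/-- `Ext¹_R(X, Y) = 0`, expressed without `Ext`: maps into `Y` extend along every injection with
cokernel `X`. -/
def ExtOneVanishes (R : Type u) [Ring R] (X Y : Type u) [AddCommGroup X] [Module R X]
    [AddCommGroup Y] [Module R Y] : Prop :=
  ∀ ⦃A B : Type u⦄ [AddCommGroup A] [Module R A] [AddCommGroup B] [Module R B]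
    (i : A →ₗ[R] B) (p : B →ₗ[R] X), IsShortExact i p →
    ∀ φ : A →ₗ[R] Y, ∃ ψ : B →ₗ[R] Y, ψ ∘ₗ i = φ

variable {R : Type u} [Ring R] {X X' X'' Y Z P : Type u} [AddCommGroup X] [Module R X] [AddCommGroup X'] [Module R X']
  [AddCommGroup X''] [Module R X''] [AddCommGroup Y] [Module R Y] [AddCommGroup Z] [Module R Z]
  [AddCommGroup P] [Module R P]

theorem extOneVanishes_of_projective [Module.Projective R X] : ExtOneVanishes R X Y := by
  intro A B _ _ _ _ i p h φ
  obtain ⟨r, hr⟩ := ((h.exact.split_tfae h.injective h.surjective).out 0 1).mp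
    (Module.projective_lifting_property p LinearMap.id h.surjective)
  exact ⟨φ ∘ₗ r, by rw [LinearMap.comp_assoc, hr, LinearMap.comp_id]⟩

theorem ExtOneVanishes.of_isShortExact {i : X' →ₗ[R] X} {p : X →ₗ[R] X''}
    (hip : IsShortExact i p) (h' : ExtOneVanishes R X' Y) (h'' : ExtOneVanishes R X'' Y) :
    ExtOneVanishes R X Y := by
  intro A B _ _ _ _ j q hjq φ
  set B' := LinearMap.ker (p ∘ₗ q)
  have hjB' : ∀ a, j a ∈ B' := fun a => by simp [B', hjq.exact.apply_apply_eq_zero]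
  let j' : A →ₗ[R] B' := j.codRestrict B' hjB'
  obtain ⟨q', hq'⟩ := LinearMap.exists_comp_eq_of_injective hip.injective (q ∘ₗ B'.subtype) <| by
    rintro _ ⟨⟨b, hb⟩, rfl⟩
    exact (hip.exact _).mp hb
  have hq'_apply (w : B') : i (q' w) = q w := LinearMap.congr_fun hq' w
  have hj'q' : IsShortExact j' q' := by
    refine ⟨fun a a' e => hjq.injective (congrArg Subtype.val e), fun x' => ?_, fun w => ?_⟩
    · obtain ⟨b, hb⟩ := hjq.surjective (i x')
      refine ⟨⟨b, by simp [B', hb, hip.exact.apply_apply_eq_zero]⟩, hip.injective ?_⟩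
      rw [hq'_apply, hb]
    · rw [← hip.injective.eq_iff, map_zero, hq'_apply, hjq.exact]
      exact ⟨fun ⟨a, ha⟩ => ⟨a, Subtype.ext ha⟩, fun ⟨a, ha⟩ => ⟨a, congrArg Subtype.val ha⟩⟩
  obtain ⟨ψ', hψ'⟩ := h' j' q' hj'q' φ
  obtain ⟨ψ, hψ⟩ := h'' B'.subtype (p ∘ₗ q) ⟨B'.injective_subtype,
    hip.surjective.comp hjq.surjective, LinearMap.exact_subtype_ker_map _⟩ ψ'
  refine ⟨ψ, ?_⟩
  rw [show j = B'.subtype ∘ₗ j' from rfl, ← LinearMap.comp_assoc, hψ, hψ']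

/-- Dimension shifting: `Ext¹(X, Y)` is the cokernel of `Hom(P, Y) → Hom(Z, Y)`. -/
theorem ExtOneVanishes.of_projective_of_isShortExact [Module.Projective R P] {ι : Z →ₗ[R] P}
    {π : P →ₗ[R] X} (hιπ : IsShortExact ι π)
    (hext : ∀ h : Z →ₗ[R] Y, ∃ g : P →ₗ[R] Y, g ∘ₗ ι = h) : ExtOneVanishes R X Y := by
  intro A B _ _ _ _ j q hjq φ
  obtain ⟨l, hl⟩ := Module.projective_lifting_property q π hjq.surjective
  have hl_apply (x : P) : q (l x) = π x := LinearMap.congr_fun hl x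
  obtain ⟨f, hf⟩ := LinearMap.exists_comp_eq_of_injective hjq.injective (l ∘ₗ ι) <| by
    rintro _ ⟨z, rfl⟩
    exact (hjq.exact _).mp (by simp [hl_apply, hιπ.exact.apply_apply_eq_zero])
  obtain ⟨g, hg⟩ := hext (φ ∘ₗ f)
  have hσ : Surjective (j.coprod l) := by
    intro b
    obtain ⟨x, hx⟩ := hιπ.surjective (q b)
    obtain ⟨a, ha⟩ := (hjq.exact (b - l x)).mp (by simp [hl_apply, hx])
    exact ⟨(a, x), by simp [ha]⟩
  obtain ⟨ψ, hψ⟩ := LinearMap.exists_comp_eq_of_surjective hσ (φ.coprod g) <| by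
    rintro ⟨a, x⟩ hax
    have hax : j a + l x = 0 := hax
    obtain ⟨z, rfl⟩ := (hιπ.exact x).mp (by
      rw [← hl_apply, eq_neg_of_add_eq_zero_right hax, map_neg, hjq.exact.apply_apply_eq_zero,
        neg_zero])
    have ha : a = -f z := hjq.injective <| by
      rw [map_neg, ← LinearMap.comp_apply j f, hf, eq_neg_of_add_eq_zero_left hax]; rfl
    simp [ha, ← LinearMap.comp_apply g ι, hg]
  exact ⟨ψ, by ext a; simpa using LinearMap.congr_fun hψ (a, 0)⟩

end ExtOneVanishes

namespace XCompleteResolution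

variable {R : Type u} [Ring R] {𝒳 : ModuleCat.{u} R → Prop} (C : XCompleteResolution R 𝒳)

abbrev cycles (n : ℤ) : Submodule R (C.P n) := LinearMap.ker (C.d n)

def toCycles (n : ℤ) : C.P n →ₗ[R] C.cycles (n + 1) :=
  (C.d n).codRestrict _ fun x => (C.exact n _).mpr ⟨x, rfl⟩

theorem isShortExact_toCycles (n : ℤ) : IsShortExact (C.cycles n).subtype (C.toCycles n) where
  injective := Submodule.injective_subtype _
  surjective := fun ⟨y, hy⟩ => let ⟨x, hx⟩ := (C.exact n y).mp hy; ⟨x, Subtype.ext hx⟩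
  exact x :=
    ⟨fun hx => ⟨⟨x, congrArg Subtype.val hx⟩, rfl⟩, by rintro ⟨y, rfl⟩; exact Subtype.ext y.2⟩

theorem exists_comp_subtype_cycles_eq {Y : ModuleCat.{u} R} (hY : 𝒳 Y) (n : ℤ)
    (h : C.cycles (n + 1 + 1) →ₗ[R] Y) :
    ∃ g : C.P (n + 1 + 1) →ₗ[R] Y, g ∘ₗ (C.cycles _).subtype = h := by
  obtain ⟨g, hg⟩ := (C.homExact Y hY n (h ∘ₗ C.toCycles (n + 1))).mp <| by
    ext x
    change h (C.toCycles (n + 1) (C.d n x)) = 0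
    rw [show C.toCycles (n + 1) (C.d n x) = 0 from Subtype.ext ((C.exact n _).mpr ⟨x, rfl⟩),
      map_zero]
  exact ⟨g, (LinearMap.cancel_right (C.isShortExact_toCycles (n + 1)).surjective).mp hg⟩

theorem extOneVanishes_cycles {Y : ModuleCat.{u} R} (hY : 𝒳 Y) (n : ℤ) :
    ExtOneVanishes R (C.cycles n) Y := by
  obtain ⟨m, rfl⟩ : ∃ m, n = m + 1 + 1 + 1 := ⟨n - 3, by ring⟩
  have := C.projective (m + 1 + 1)
  exact .of_projective_of_isShortExact (C.isShortExact_toCycles (m + 1 + 1))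
    (C.exists_comp_subtype_cycles_eq hY m)

def shift (C : XCompleteResolution R 𝒳) : XCompleteResolution R 𝒳 where
  P n := C.P (n + 1)
  d n := C.d (n + 1)
  projective n := C.projective (n + 1)
  exact n := C.exact (n + 1)
  homExact Y hY n := C.homExact Y hY (n + 1)

end XCompleteResolution

namespace XGorensteinProjective

variable {R : Type u} [Ring R] {𝒳 : ModuleCat.{u} R → Prop}

theorem of_splice {Z P : ℤ → ModuleCat.{u} R} (hP : ∀ n, Module.Projective R (P n))
    {ι : ∀ n, Z n →ₗ[R] P n} {π : ∀ n, P n →ₗ[R] Z (n + 1)} (h : ∀ n, IsShortExact (ι n) (π n))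
    (hZ : ∀ n (Y : ModuleCat.{u} R), 𝒳 Y → ExtOneVanishes R (Z n) Y) :
    XGorensteinProjective R 𝒳 (Z 0) := by
  refine ⟨⟨P, fun n => ι (n + 1) ∘ₗ π n, hP, fun n => ?_, fun Y hY n f => ⟨fun hf => ?_, ?_⟩⟩, ⟨?_⟩⟩
  · exact (h n).surjective.comp_exact_iff_exact.mpr
      ((h (n + 1 + 1)).injective.comp_exact_iff_exact.mpr (h (n + 1)).exact)
  · have hfι : f ∘ₗ ι (n + 1) = 0 :=
      (LinearMap.cancel_right (h n).surjective).mp (by rw [LinearMap.comp_assoc]; exact hf)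
    obtain ⟨f', hf'⟩ := LinearMap.exists_comp_eq_of_surjective (h (n + 1)).surjective f <| by
      rw [(h (n + 1)).exact.linearMap_ker_eq]
      exact LinearMap.range_le_ker_iff.mpr hfι
    obtain ⟨g, hg⟩ := hZ (n + 1 + 1 + 1) Y hY (ι (n + 1 + 1)) (π (n + 1 + 1)) (h _) f'
    exact ⟨g, by simp only; rw [← LinearMap.comp_assoc, hg, hf']⟩
  · rintro ⟨g, rfl⟩
    ext x
    simp [(h (n + 1)).exact.apply_apply_eq_zero]
  · refine (LinearEquiv.ofInjective (ι 0) (h 0).injective).trans (LinearEquiv.ofEq _ _ ?_)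
    rw [LinearMap.ker_comp, LinearMap.ker_eq_bot.mpr (h _).injective, Submodule.comap_bot,
      (h 0).exact.linearMap_ker_eq]

end XGorensteinProjective

section NineLemma

open LinearMap

variable {R : Type*} [Ring R] {ZA PA ZA' ZC PC ZC' E : Type*} [AddCommGroup ZA] [Module R ZA]
  [AddCommGroup PA] [Module R PA] [AddCommGroup ZA'] [Module R ZA'] [AddCommGroup ZC]
  [Module R ZC] [AddCommGroup PC] [Module R PC] [AddCommGroup ZC'] [Module R ZC']
  [AddCommGroup E] [Module R E]
  {ιA : ZA →ₗ[R] PA} {πA : PA →ₗ[R] ZA'} {ιC : ZC →ₗ[R] PC} {πC : PC →ₗ[R] ZC'}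

/- The two halves of the `3 × 3` lemma for a diagram with outer columns `ZA ↪ PA ↠ ZA'`,
`ZC ↪ PC ↠ ZC'` and split middle row `PA ↪ PA × PC ↠ PC`: a compatible top row yields the bottom
row on the cokernel of the middle column, and a compatible bottom row the top row on its kernel. -/

theorem exists_isShortExact_quotient_range (hA : IsShortExact ιA πA) (hC : IsShortExact ιC πC)
    {i : ZA →ₗ[R] E} {p : E →ₗ[R] ZC} (hip : IsShortExact i p) {u : E →ₗ[R] PA × PC}
    (hui : u ∘ₗ i = inl R PA PC ∘ₗ ιA) (hup : snd R PA PC ∘ₗ u = ιC ∘ₗ p) :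
    ∃ (i' : ZA' →ₗ[R] (PA × PC) ⧸ range u) (p' : (PA × PC) ⧸ range u →ₗ[R] ZC'),
      IsShortExact i' p' := by
  have hui_apply (a : ZA) : u (i a) = (ιA a, 0) := LinearMap.congr_fun hui a
  have hup_apply (e : E) : (u e).2 = ιC (p e) := LinearMap.congr_fun hup e
  obtain ⟨i', hi'⟩ :=
      exists_comp_eq_of_surjective hA.surjective ((range u).mkQ ∘ₗ inl R PA PC) <| by
    intro x hx
    obtain ⟨a, rfl⟩ := (hA.exact x).mp hx
    simp [← hui_apply]
  have hi'_apply (x : PA) : i' (πA x) = Submodule.Quotient.mk (x, 0) := LinearMap.congr_fun hi' x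
  have hN : range u ≤ ker (πC ∘ₗ snd R PA PC) := by
    rintro _ ⟨e, rfl⟩
    simp [hup_apply, hC.exact.apply_apply_eq_zero]
  refine ⟨i', (range u).liftQ _ hN, ?_, ?_, fun w => ⟨fun hw => ?_, ?_⟩⟩
  · refine (injective_iff_map_eq_zero _).mpr fun z hz => ?_
    obtain ⟨x, rfl⟩ := hA.surjective z
    obtain ⟨e, he⟩ := (Submodule.Quotient.mk_eq_zero _).mp ((hi'_apply x).symm.trans hz)
    have hpe : p e = 0 := hC.injective (by rw [← hup_apply, he, map_zero])
    obtain ⟨a, rfl⟩ := (hip.exact e).mp hpe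
    rw [hui_apply, Prod.mk.injEq] at he
    rw [← he.1]
    exact hA.exact.apply_apply_eq_zero a
  · intro z
    obtain ⟨y, rfl⟩ := hC.surjective z
    exact ⟨Submodule.Quotient.mk (0, y), rfl⟩
  · obtain ⟨⟨x, y⟩, rfl⟩ := Submodule.mkQ_surjective _ w
    obtain ⟨c, rfl⟩ := (hC.exact y).mp hw
    obtain ⟨e, rfl⟩ := hip.surjective c
    refine ⟨πA (x - (u e).1), (hi'_apply _).trans ((Submodule.Quotient.eq _).mpr ⟨-e, ?_⟩)⟩
    simp [Prod.ext_iff, hup_apply]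
  · rintro ⟨z, rfl⟩
    obtain ⟨x, rfl⟩ := hA.surjective z
    simp [hi'_apply]

theorem exists_isShortExact_ker (hA : IsShortExact ιA πA) (hC : IsShortExact ιC πC)
    {i' : ZA' →ₗ[R] E} {p' : E →ₗ[R] ZC'} (hip' : IsShortExact i' p') {v : PA × PC →ₗ[R] E}
    (hvi : v ∘ₗ inl R PA PC = i' ∘ₗ πA) (hvp : p' ∘ₗ v = πC ∘ₗ snd R PA PC) :
    ∃ (i : ZA →ₗ[R] ker v) (p : ker v →ₗ[R] ZC), IsShortExact i p := by
  have hvi_apply (x : PA) : v (x, 0) = i' (πA x) := LinearMap.congr_fun hvi x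
  have hvp_apply (w : PA × PC) : p' (v w) = πC w.2 := LinearMap.congr_fun hvp w
  let i : ZA →ₗ[R] ker v := (inl R PA PC ∘ₗ ιA).codRestrict (ker v) fun a => by
    simp [hvi_apply, hA.exact.apply_apply_eq_zero]
  obtain ⟨p, hp⟩ := exists_comp_eq_of_injective hC.injective (snd R PA PC ∘ₗ (ker v).subtype) <| by
    rintro _ ⟨⟨w, hw⟩, rfl⟩
    exact (hC.exact w.2).mp (by rw [← hvp_apply, mem_ker.mp hw, map_zero])
  have hp_apply (w : ker v) : ιC (p w) = (w : PA × PC).2 := LinearMap.congr_fun hp w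
  refine ⟨i, p, fun a a' e => hA.injective (congrArg (Prod.fst ∘ Subtype.val) e), fun c => ?_,
    fun w => ⟨fun hw => ?_, ?_⟩⟩
  · obtain ⟨z, hz⟩ := (hip'.exact (v (0, ιC c))).mp (by
      rw [hvp_apply, hC.exact.apply_apply_eq_zero])
    obtain ⟨x, rfl⟩ := hA.surjective z
    refine ⟨⟨(-x, ιC c), ?_⟩, hC.injective (hp_apply _)⟩
    rw [mem_ker, show ((-x, ιC c) : PA × PC) = (0, ιC c) - (x, 0) by simp, map_sub, hvi_apply, hz,
      sub_self]
  · obtain ⟨⟨x, y⟩, hxy⟩ := w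
    obtain rfl : y = 0 := by simpa [hw] using (hp_apply ⟨(x, y), hxy⟩).symm
    obtain ⟨a, rfl⟩ := (hA.exact x).mp
      (hip'.injective (by rw [← hvi_apply, mem_ker.mp hxy, map_zero]))
    exact ⟨a, rfl⟩
  · rintro ⟨a, rfl⟩
    exact hC.injective (by rw [hp_apply, map_zero]; rfl)

end NineLemma

theorem exists_int_chain {S : ℤ → Sort*} (r : ∀ n, S n → S (n + 1) → Prop)
    (hsucc : ∀ n s, ∃ t, r n s t) (hpred : ∀ n t, ∃ s, r n s t) (s₀ : S 0) :
    ∃ f : ∀ n, S n, f 0 = s₀ ∧ ∀ n, r n (f n) (f (n + 1)) := by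
  choose succ hsucc using hsucc
  choose pred hpred using hpred
  let up : ∀ k : ℕ, S k := fun k => Nat.rec s₀ (fun k s => succ k s) k
  let down : ∀ k : ℕ, S (Int.negSucc k) :=
    fun k => Nat.rec (pred (Int.negSucc 0) s₀) (fun k s => pred (Int.negSucc (k + 1)) s) k
  let f : ∀ n, S n
    | .ofNat k => up k
    | .negSucc k => down k
  refine ⟨f, rfl, ?_⟩
  rintro (k | _ | k)
  · exact hsucc k (up k)
  · exact hpred (Int.negSucc 0) s₀
  · exact hpred (Int.negSucc (k + 1)) (down k)

namespace XCompleteResolution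

variable {R : Type u} [Ring R] {𝒳 : ModuleCat.{u} R → Prop}

structure CyclesExtension (CA CC : XCompleteResolution R 𝒳) (n : ℤ) where
  E : ModuleCat.{u} R
  i : CA.cycles n →ₗ[R] E
  p : E →ₗ[R] CC.cycles n
  isShortExact : IsShortExact i p

namespace CyclesExtension

variable {CA CC : XCompleteResolution R 𝒳} {n : ℤ}

def Linked (L : CyclesExtension CA CC n) (L' : CyclesExtension CA CC (n + 1)) : Prop :=
  ∃ (u : L.E →ₗ[R] CA.P n × CC.P n) (q : CA.P n × CC.P n →ₗ[R] L'.E), IsShortExact u q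

theorem exists_linked_succ (h𝒳 : ∀ P : ModuleCat.{u} R, Module.Projective R P → 𝒳 P)
    (L : CyclesExtension CA CC n) : ∃ L', L.Linked L' := by
  -- `Ext¹(CC.cycles n, CA.P n) = 0` as `CA.P n ∈ 𝒳`: this is why projectives must lie in `𝒳`.
  obtain ⟨ψ, hψ⟩ := CC.extOneVanishes_cycles (h𝒳 _ (CA.projective n)) n L.i L.p L.isShortExact
    (CA.cycles n).subtype
  let u := ψ.prod ((CC.cycles n).subtype ∘ₗ L.p)
  have hui : u ∘ₗ L.i = LinearMap.inl R _ _ ∘ₗ (CA.cycles n).subtype := by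
    ext a
    · exact LinearMap.congr_fun hψ a
    · simp [u, L.isShortExact.exact.apply_apply_eq_zero]
  have hu : Injective u := by
    refine (injective_iff_map_eq_zero u).mpr fun e he => ?_
    obtain ⟨a, rfl⟩ := (L.isShortExact.exact e).mp (Subtype.ext (congrArg Prod.snd he))
    have ha : a = 0 := Subtype.ext ((LinearMap.congr_fun hψ a).symm.trans (congrArg Prod.fst he))
    rw [ha, map_zero]
  obtain ⟨i', p', h'⟩ := exists_isShortExact_quotient_range (CA.isShortExact_toCycles n)
    (CC.isShortExact_toCycles n) L.isShortExact hui (LinearMap.snd_prod _ _)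
  exact ⟨⟨.of R _, i', p', h'⟩, u, (LinearMap.range u).mkQ, hu, Submodule.mkQ_surjective _,
    LinearMap.exact_map_mkQ_range u⟩

theorem exists_linked_pred (L' : CyclesExtension CA CC (n + 1)) :
    ∃ L : CyclesExtension CA CC n, L.Linked L' := by
  have := CC.projective n
  obtain ⟨τ, hτ⟩ := Module.projective_lifting_property L'.p (CC.toCycles n)
    L'.isShortExact.surjective
  let v := (L'.i ∘ₗ CA.toCycles n).coprod τ
  have hvp : L'.p ∘ₗ v = CC.toCycles n ∘ₗ LinearMap.snd R _ _ := by
    refine LinearMap.ext fun ⟨x, y⟩ => ?_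
    simp [v, L'.isShortExact.exact.apply_apply_eq_zero, ← hτ]
  have hv : Surjective v := by
    intro e
    obtain ⟨y, hy⟩ := (CC.isShortExact_toCycles n).surjective (L'.p e)
    obtain ⟨a, ha⟩ := (L'.isShortExact.exact (e - τ y)).mp (by
      rw [map_sub, ← LinearMap.comp_apply L'.p τ, hτ, hy, sub_self])
    obtain ⟨x, rfl⟩ := (CA.isShortExact_toCycles n).surjective a
    exact ⟨(x, y), by simp [v, ha]⟩
  obtain ⟨i, p, h⟩ := exists_isShortExact_ker (CA.isShortExact_toCycles n)
    (CC.isShortExact_toCycles n) L'.isShortExact (LinearMap.coprod_inl _ _) hvp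
  exact ⟨⟨.of R _, i, p, h⟩, (LinearMap.ker v).subtype, v, Submodule.injective_subtype _, hv,
    LinearMap.exact_subtype_ker_map v⟩

end CyclesExtension

end XCompleteResolution

namespace XGorensteinProjective

variable {R : Type u} [Ring R] {𝒳 : ModuleCat.{u} R → Prop}

theorem of_linearEquiv {G G' : ModuleCat.{u} R} (hG : XGorensteinProjective R 𝒳 G)
    (e : G ≃ₗ[R] G') : XGorensteinProjective R 𝒳 G' :=
  let ⟨C, ⟨eG⟩⟩ := hG
  ⟨C, ⟨e.symm.trans eG⟩⟩

theorem of_projective {P : ModuleCat.{u} R} (hP : Module.Projective R P) :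
    XGorensteinProjective R 𝒳 P :=
  of_splice (Z := fun _ => P) (P := fun _ => .of R (P × P)) (fun _ => inferInstance)
    (fun _ => ⟨LinearMap.inl_injective, LinearMap.snd_surjective, Exact.inl_snd⟩)
    (fun _ _ _ => extOneVanishes_of_projective)

theorem exists_isShortExact_projective {G : ModuleCat.{u} R}
    (hG : XGorensteinProjective R 𝒳 G) :
    ∃ (P H : ModuleCat.{u} R) (j : G →ₗ[R] P) (r : P →ₗ[R] H),
      Module.Projective R P ∧ IsShortExact j r ∧ XGorensteinProjective R 𝒳 H := by
  obtain ⟨C, ⟨e⟩⟩ := hG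
  exact ⟨C.P 0, .of R (C.cycles (0 + 1)), _, _, C.projective 0,
    (C.isShortExact_toCycles 0).comp_linearEquiv e (LinearEquiv.refl R _),
    C.shift, ⟨LinearEquiv.refl R _⟩⟩

theorem of_isShortExact (h𝒳 : ∀ P : ModuleCat.{u} R, Module.Projective R P → 𝒳 P)
    {A B C : ModuleCat.{u} R} {i : A →ₗ[R] B} {p : B →ₗ[R] C} (hip : IsShortExact i p)
    (hA : XGorensteinProjective R 𝒳 A) (hC : XGorensteinProjective R 𝒳 C) :
    XGorensteinProjective R 𝒳 B := by
  obtain ⟨CA, ⟨eA⟩⟩ := hA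
  obtain ⟨CC, ⟨eC⟩⟩ := hC
  obtain ⟨L, hL₀, hL⟩ := exists_int_chain (S := XCompleteResolution.CyclesExtension CA CC)
    (fun _ L L' => L.Linked L')
    (fun _ => XCompleteResolution.CyclesExtension.exists_linked_succ h𝒳)
    (fun _ => XCompleteResolution.CyclesExtension.exists_linked_pred)
    ⟨B, _, _, hip.comp_linearEquiv eA.symm eC⟩
  choose u q huq using hL
  have hP (n : ℤ) : Module.Projective R (ModuleCat.of R (CA.P n × CC.P n)) :=
    have := CA.projective n
    have := CC.projective n
    inferInstanceAs (Module.Projective R (CA.P n × CC.P n))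
  have hB := of_splice hP huq fun n Y hY =>
    .of_isShortExact (L n).isShortExact (CA.extOneVanishes_cycles hY n)
      (CC.extOneVanishes_cycles hY n)
  rwa [hL₀] at hB

end XGorensteinProjective

section Dimension

variable {R : Type u} [Ring R] {𝒞 𝒞' : ModuleCat.{u} R → Prop}

theorem ResWithKernel.mono (h : ∀ X, 𝒞 X → 𝒞' X) :
    ∀ {m : ℕ} {K M : ModuleCat.{u} R}, ResWithKernel R 𝒞 m K M → ResWithKernel R 𝒞' m K M
  | 0, _, _, hres => hres
  | _ + 1, _, _, ⟨G, L, f, g, hG, hf, hg, hfg, hres⟩ =>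
    ⟨G, L, f, g, h G hG, hf, hg, hfg, ResWithKernel.mono h hres⟩

theorem relDim_le {m : ℕ} {K M : ModuleCat.{u} R} (hK : 𝒞 K) (h : ResWithKernel R 𝒞 m K M) :
    relDim R 𝒞 M ≤ m :=
  sInf_le ⟨m, rfl, K, hK, h⟩

theorem le_relDim {d : ℕ∞} {M : ModuleCat.{u} R}
    (h : ∀ (m : ℕ) K, 𝒞 K → ResWithKernel R 𝒞 m K M → d ≤ m) : d ≤ relDim R 𝒞 M :=
  le_sInf fun _ ⟨m, hm, K, hK, hres⟩ => hm ▸ h m K hK hres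

theorem exists_resWithKernel_of_relDim_eq {n : ℕ} {M : ModuleCat.{u} R}
    (h : relDim R 𝒞 M = n) : ∃ K, 𝒞 K ∧ ResWithKernel R 𝒞 n K M := by
  have hne : {d : ℕ∞ | ∃ m : ℕ, d = m ∧ ∃ K, 𝒞 K ∧ ResWithKernel R 𝒞 m K M}.Nonempty :=
    Set.nonempty_iff_ne_empty.mpr fun hS => by simp [relDim, hS] at h
  obtain ⟨m, hm, hK⟩ := csInf_mem hne
  obtain rfl : n = m := by exact_mod_cast h.symm.trans hm
  exact hK

end Dimension

section

variable {R : Type u} [Ring R] {𝒳 : ModuleCat.{u} R → Prop}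

theorem exists_xGorensteinProjective_isShortExact
    (h𝒳 : ∀ P : ModuleCat.{u} R, Module.Projective R P → 𝒳 P)
    {L G₀ M D H : ModuleCat.{u} R} {a : L →ₗ[R] G₀} {q : G₀ →ₗ[R] M} {b : L →ₗ[R] D}
    {t : D →ₗ[R] H} (haq : IsShortExact a q) (hbt : IsShortExact b t)
    (hG₀ : XGorensteinProjective R 𝒳 G₀) (hH : XGorensteinProjective R 𝒳 H) :
    ∃ (E : ModuleCat.{u} R) (i : D →ₗ[R] E) (e : E →ₗ[R] M),
      IsShortExact i e ∧ XGorensteinProjective R 𝒳 E := by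
  obtain ⟨e, he⟩ := LinearMap.isShortExact_pushoutInr (b := b) haq
  obtain ⟨t', ht'⟩ := LinearMap.isShortExact_pushoutInl (a := a) hbt
  exact ⟨.of R (a.Pushout b), _, e, he, .of_isShortExact h𝒳 ht' hG₀ hH⟩

theorem exists_isShortExact_of_resWithKernel_succ
    (h𝒳 : ∀ P : ModuleCat.{u} R, Module.Projective R P → 𝒳 P) :
    ∀ (m : ℕ) {Kg M : ModuleCat.{u} R}, XGorensteinProjective R 𝒳 Kg →
      ResWithKernel R (XGorensteinProjective R 𝒳) (m + 1) Kg M →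
      ∃ (K G : ModuleCat.{u} R) (f : K →ₗ[R] G) (g : G →ₗ[R] M),
        IsShortExact f g ∧ XGorensteinProjective R 𝒳 G ∧
        ∃ Q : ModuleCat.{u} R, Module.Projective R Q ∧
          ResWithKernel R (fun N => Module.Projective R N) m Q K
  | 0, _, _, hKg, ⟨_, _, _, _, hG₀, ha, hq, haq, ⟨eL⟩⟩ => by
    obtain ⟨P, H, j, r, hP, hjr, hH⟩ := (hKg.of_linearEquiv eL).exists_isShortExact_projective
    obtain ⟨E, i, e, hie, hE⟩ :=
      exists_xGorensteinProjective_isShortExact h𝒳 ⟨ha, hq, haq⟩ hjr hG₀ hH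
    exact ⟨P, E, i, e, hie, hE, P, hP, ⟨LinearEquiv.refl R P⟩⟩
  | m + 1, _, _, hKg, ⟨_, _, _, _, hG₀, ha, hq, haq, hres⟩ => by
    obtain ⟨K', G', k, π, hkπ, hG', Q, hQ, hQK'⟩ :=
      exists_isShortExact_of_resWithKernel_succ h𝒳 m hKg hres
    obtain ⟨P, H, j, r, hP, hjr, hH⟩ := hG'.exists_isShortExact_projective
    obtain ⟨t, hπt⟩ := LinearMap.isShortExact_pushoutInr (b := π) hjr
    obtain ⟨E, i, e, hie, hE⟩ := exists_xGorensteinProjective_isShortExact h𝒳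
      (D := .of R (j.Pushout π)) ⟨ha, hq, haq⟩ hπt hG₀ hH
    exact ⟨.of R (j.Pushout π), E, i, e, hie, hE, Q, hQ, P, K', j ∘ₗ k, j.pushoutInl π, hP,
      hjr.injective.comp hkπ.injective, LinearMap.pushoutInl_surjective hkπ.surjective,
      LinearMap.exact_comp_pushoutInl hkπ.exact, hQK'⟩

end

/-- If `𝒳-Gpd(M) = n` with `1 ≤ n < ∞`, then there is a short exact sequence
`0 → K → G → M → 0` with `G` `𝒳`-Gorenstein projective and `pd(K) = n - 1`. -/
theorem exists_shortExact_of_xGpd_eq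
    (R : Type u) [Ring R] (𝒳 : ModuleCat.{u} R → Prop)
    (h𝒳 : ∀ P : ModuleCat.{u} R, Module.Projective R P → 𝒳 P)
    (M : ModuleCat.{u} R) (n : ℕ) (hn : 1 ≤ n)
    (hM : xGpd R 𝒳 M = (n : ℕ∞)) :
    ∃ (K G : ModuleCat.{u} R) (f : K →ₗ[R] G) (g : G →ₗ[R] M),
      Function.Injective f ∧ Function.Surjective g ∧ Function.Exact f g ∧
      XGorensteinProjective R 𝒳 G ∧ pdim R K = ((n - 1 : ℕ) : ℕ∞) := by
  obtain ⟨m, rfl⟩ : ∃ m, n = m + 1 := ⟨n - 1, by omega⟩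
  obtain ⟨Kg, hKg, hres⟩ := exists_resWithKernel_of_relDim_eq hM
  obtain ⟨K, G, f, g, hfg, hG, Q, hQ, hQK⟩ :=
    exists_isShortExact_of_resWithKernel_succ h𝒳 m hKg hres
  refine ⟨K, G, f, g, hfg.injective, hfg.surjective, hfg.exact, hG, ?_⟩
  rw [Nat.add_sub_cancel]
  refine le_antisymm (relDim_le hQ hQK) (le_relDim fun m' Q' hQ' hQ'K => ?_)
  have hM' : xGpd R 𝒳 M ≤ (m' + 1 : ℕ) := relDim_le (XGorensteinProjective.of_projective hQ')
    ⟨G, K, f, g, hG, hfg.injective, hfg.surjective, hfg.exact,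
      hQ'K.mono fun _ => XGorensteinProjective.of_projective⟩
  rw [hM] at hM'
  exact_mod_cast Nat.le_of_succ_le_succ (by exact_mod_cast hM')
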